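/- For finite nonempty sets A, B of non-negative integers, |A + B| = |A| * |B| if and only if the difference sets D_A = {a - a' : a, a' ∈ A, a > a'} and D_B = {b - b' : b, b' ∈ B, b > b'} are disjoint, where A + B = {a + b : a ∈ A, b ∈ B} is the sumset. -/

import Mathlib

open Pointwise

/-- The difference set of a finite set of naturals: positive differences of pairs. -/
def diffSet (A : Finset ℕ) : Finset ℕ :=
  ((A ×ˢ A).filter (fun p => p.2 < p.1)).image (fun p => p.1 - p.2)

/-! A coincidence `a + b = a' + b'` in `A + B` with `a' < a` is the same thing as a common
difference `a - a' = b' - b` of `A` and `B`, so the sums `a + b` are pairwise distinct exactly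
when `D_A` and `D_B` are disjoint. -/

lemma mem_diffSet {A : Finset ℕ} {d : ℕ} :
    d ∈ diffSet A ↔ ∃ a₁ ∈ A, ∃ a₂ ∈ A, a₂ < a₁ ∧ a₁ - a₂ = d := by
  simp only [diffSet, Finset.mem_image, Finset.mem_filter, Finset.mem_product, Prod.exists]
  grind

lemma sub_mem_diffSet {A : Finset ℕ} {a₁ a₂ : ℕ} (h₁ : a₁ ∈ A) (h₂ : a₂ ∈ A) (h : a₂ < a₁) :
    a₁ - a₂ ∈ diffSet A :=
  mem_diffSet.2 ⟨a₁, h₁, a₂, h₂, h, rfl⟩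

theorem injOn_add_iff_disjoint_diffSet (A B : Finset ℕ) :
    (A ×ˢ B : Set (ℕ × ℕ)).InjOn (fun p => p.1 + p.2) ↔ Disjoint (diffSet A) (diffSet B) := by
  constructor
  · intro hinj
    refine Finset.disjoint_left.2 fun d hdA hdB => ?_
    obtain ⟨a₁, ha₁, a₂, ha₂, ha, rfl⟩ := mem_diffSet.1 hdA
    obtain ⟨b₁, hb₁, b₂, hb₂, hb, hd⟩ := mem_diffSet.1 hdB
    have hsum : a₁ + b₂ = a₂ + b₁ := by omega
    have hpair := hinj (Set.mk_mem_prod ha₁ hb₂) (Set.mk_mem_prod ha₂ hb₁) hsum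
    exact ha.ne' (Prod.ext_iff.1 hpair).1
  · rintro hdisj ⟨a, b⟩ ⟨ha, hb⟩ ⟨a', b'⟩ ⟨ha', hb'⟩ (hsum : a + b = a' + b')
    wlog hle : a' ≤ a generalizing a b a' b'
    · exact (this a' b' ha' hb' a b ha hb hsum.symm (by omega)).symm
    obtain rfl | hlt := hle.eq_or_lt
    · rw [Prod.mk.injEq]
      omega
    · have hb_lt : b < b' := by omega
      have hcommon : a - a' = b' - b := by omega
      exact (Finset.disjoint_left.1 hdisj (hcommon ▸ sub_mem_diffSet ha ha' hlt)
        (sub_mem_diffSet hb' hb hb_lt)).elim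

theorem stmt_0_general (A B : Finset ℕ) :
    (A + B).card = A.card * B.card ↔ Disjoint (diffSet A) (diffSet B) := by
  rw [Finset.card_add_iff, injOn_add_iff_disjoint_diffSet]

theorem stmt_0 (A B : Finset ℕ) (hA : A.Nonempty) (hB : B.Nonempty) :
    (A + B).card = A.card * B.card ↔ Disjoint (diffSet A) (diffSet B) :=
  stmt_0_general A B
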